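/- arXiv:1710.05001 — 3 statements merged into one kernel-verified Lean document; each statement's English description precedes it below -/
import Mathlib

section
/- For every positive integer r, positive integer n, and real x, Σ_{j=0}^{r-1} 𝔅_n(x + j/r) = r^{1-n} · 𝔅_n(r x) (Raabe's multiplication theorem for Bernoulli functions). -/
/-!
Over `ℚ[X]`, the defect `Dₙ = rⁿ ∑ⱼ Bₙ((X + j)/r) - r Bₙ` is 1-periodic: shifting `X` by one
telescopes the sum, and `Bₙ(x + 1) - Bₙ(x) = n xⁿ⁻¹` makes both differences equal to `r n Xⁿ⁻¹`.
A periodic polynomial is constant, and since `D'ₙ₊₁ = (n + 1) Dₙ`, the constant `Dₙ` is the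
derivative of a constant, hence zero.

For the periodic functions, both sides are `1/r`-periodic in `x`, so it suffices to compare them on
`[0, 1/r)`. There every argument lies in `[0, 1)`, where `𝔅ₙ = Bₙ` except for `𝔅₁(0) = 0`; in that
case the polynomial identity at `x = 0` loses the term `B₁(0)` on both sides.
-/

open Finset

/-- Bernoulli polynomial evaluated on ℝ. -/
noncomputable def bernPoly (n : ℕ) (x : ℝ) : ℝ :=
  ((Polynomial.bernoulli n).map (algebraMap ℚ ℝ)).eval x

/-- Periodic Bernoulli function 𝔅ₙ (with 𝔅₁ vanishing at integers). -/
noncomputable def pB (n : ℕ) (x : ℝ) : ℝ :=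
  if n = 1 ∧ Int.fract x = 0 then 0 else bernPoly n (Int.fract x)

/-- Euler polynomial Eₙ (via the standard Bernoulli identity). -/
noncomputable def eulerPoly (n : ℕ) (x : ℝ) : ℝ :=
  2 ^ (n + 1) / (n + 1) * (bernPoly (n + 1) ((x + 1) / 2) - bernPoly (n + 1) (x / 2))

/-- Periodic Euler function ℰₙ, with ℰₙ(x+m) = (-1)^m ℰₙ(x). -/
noncomputable def pE (n : ℕ) (x : ℝ) : ℝ :=
  (-1 : ℝ) ^ ⌊x⌋ * eulerPoly n (Int.fract x)

/-- Conjugate Dirichlet character χ̄. -/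
noncomputable def conjChar {k : ℕ} (χ : DirichletCharacter ℂ k) : DirichletCharacter ℂ k :=
  χ.ringHomComp (starRingEnd ℂ)

/-- Generalized Bernoulli function 𝔅_{m,χ}(x) = k^{m-1} Σ_{j=0}^{k-1} χ̄(j) 𝔅_m((j+x)/k). -/
noncomputable def genB {k : ℕ} (χ : DirichletCharacter ℂ k) (m : ℕ) (x : ℝ) : ℂ :=
  (k : ℂ) ^ ((m : ℤ) - 1) *
    ∑ j ∈ Finset.range k, conjChar χ j * ((pB m ((j + x) / k) : ℝ) : ℂ)

/-- Character Euler function ℰ_{m,χ}(x) = k^m Σ_{j=0}^{k-1} (-1)^j χ̄(j) ℰ_m((j+x)/k). -/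
noncomputable def genE {k : ℕ} (χ : DirichletCharacter ℂ k) (m : ℕ) (x : ℝ) : ℂ :=
  (k : ℂ) ^ m *
    ∑ j ∈ Finset.range k, (-1 : ℂ) ^ j * conjChar χ j * ((pE m ((j + x) / k) : ℝ) : ℂ)

/-- Character Hardy–Berndt sum s_{1,p}(d,c:χ). -/
noncomputable def s1p {k : ℕ} (χ : DirichletCharacter ℂ k) (p d c : ℕ) : ℂ :=
  ∑ n ∈ Finset.Icc 1 (c * k),
    χ n * genE χ (p - 1) ((d : ℝ) * n / c) * ((pB 1 ((n : ℝ) / ((c : ℝ) * k)) : ℝ) : ℂ)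

/-- Character Hardy–Berndt sum s_{2,p}(d,c:χ). -/
noncomputable def s2p {k : ℕ} (χ : DirichletCharacter ℂ k) (p d c : ℕ) : ℂ :=
  ∑ n ∈ Finset.Icc 1 (c * k),
    (-1 : ℂ) ^ n * χ n * genB χ p ((d : ℝ) * n / c) * ((pB 1 ((n : ℝ) / ((c : ℝ) * k)) : ℝ) : ℂ)

/-- Character Hardy–Berndt sum s_{5,p}(d,c:χ). -/
noncomputable def s5p {k : ℕ} (χ : DirichletCharacter ℂ k) (p d c : ℕ) : ℂ :=
  ∑ n ∈ Finset.Icc 1 (c * k),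
    (-1 : ℂ) ^ n * χ n * genE χ (p - 1) ((d : ℝ) * n / c) * ((pB 1 ((n : ℝ) / ((c : ℝ) * k)) : ℝ) : ℂ)

open Polynomial

theorem Function.Periodic.eq_of_eqOn_Ico {α β : Type*} [AddCommGroup α] [LinearOrder α]
    [IsOrderedAddMonoid α] [Archimedean α] {f g : α → β} {c : α} (hf : f.Periodic c)
    (hg : g.Periodic c) (hc : 0 < c) (h : Set.EqOn f g (Set.Ico 0 c)) : f = g := by
  funext x
  obtain ⟨k, hk, -⟩ := existsUnique_zsmul_near_of_pos' hc x
  rw [← hf.sub_zsmul_eq k, ← hg.sub_zsmul_eq k]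
  exact h hk

namespace Polynomial

theorem eq_C_eval_zero_of_eval_add_one {R : Type*} [CommRing R] [IsDomain R] [CharZero R]
    {p : R[X]} (h : ∀ x, p.eval (x + 1) = p.eval x) : p = C (p.eval 0) := by
  have hnat : ∀ k : ℕ, p.eval (k : R) = p.eval 0 := by
    intro k
    induction k with
    | zero => simp
    | succ k ih => rw [Nat.cast_succ, h, ih]
  refine eq_of_infinite_eval_eq _ _ ((Set.infinite_range_of_injective Nat.cast_injective).mono ?_)
  rintro _ ⟨k, rfl⟩
  simp [hnat]

noncomputable def raabeDefect (r n : ℕ) : ℚ[X] :=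
  C ((r : ℚ) ^ n) * ∑ j ∈ range r, (bernoulli n).comp (C (r : ℚ)⁻¹ * (X + C (j : ℚ))) -
    C (r : ℚ) * bernoulli n

variable {r : ℕ}

theorem raabeDefect_eval_add_one (hr : r ≠ 0) (n : ℕ) (x : ℚ) :
    (raabeDefect r n).eval (x + 1) = (raabeDefect r n).eval x := by
  have hr' : (r : ℚ) ≠ 0 := Nat.cast_ne_zero.mpr hr
  set f : ℕ → ℚ := fun j => (bernoulli n).eval ((r : ℚ)⁻¹ * (x + j))
  have htel : ∑ j ∈ range r, f (j + 1) - ∑ j ∈ range r, f j = n * (x / r) ^ (n - 1) := by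
    rw [← sum_sub_distrib, sum_range_sub]
    simp only [f, Nat.cast_zero, add_zero]
    rw [show (r : ℚ)⁻¹ * (x + r) = 1 + x / r by field_simp; ring, bernoulli_eval_one_add,
      div_eq_inv_mul, add_sub_cancel_left]
  have hpow : (r : ℚ) ^ n * (n * (x / r) ^ (n - 1)) = r * (n * x ^ (n - 1)) := by
    cases n with
    | zero => simp
    | succ m => rw [Nat.add_sub_cancel, div_pow]; field_simp; ring
  have hshift : ∑ j ∈ range r, (bernoulli n).eval ((r : ℚ)⁻¹ * (x + 1 + j)) =
      ∑ j ∈ range r, f (j + 1) :=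
    sum_congr rfl fun j _ => by simp only [f, Nat.cast_succ, add_assoc, add_comm (1 : ℚ)]
  simp only [raabeDefect, eval_sub, eval_mul, eval_C, eval_finsetSum, eval_comp, eval_add,
    eval_X, eval_C]
  rw [hshift, add_comm x 1, bernoulli_eval_one_add]
  linear_combination (r : ℚ) ^ n * htel + hpow

theorem derivative_raabeDefect_succ (hr : r ≠ 0) (n : ℕ) :
    derivative (raabeDefect r (n + 1)) = (n + 1) * raabeDefect r n := by
  have hr' : (r : ℚ) ≠ 0 := Nat.cast_ne_zero.mpr hr
  simp only [raabeDefect, derivative_sub, derivative_sum, derivative_comp,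
    derivative_bernoulli_add_one, derivative_mul, derivative_C, derivative_add, derivative_X,
    mul_comp, add_comp, natCast_comp, one_comp, zero_mul, zero_add, add_zero, mul_one]
  rw [← mul_sum, ← mul_sum]
  have hC : C ((r : ℚ) ^ (n + 1)) * C (r : ℚ)⁻¹ = C ((r : ℚ) ^ n) := by
    rw [← C_mul, pow_succ, mul_inv_cancel_right₀ hr']
  linear_combination
    ((n : ℚ[X]) + 1) * (∑ j ∈ range r, (bernoulli n).comp (C (r : ℚ)⁻¹ * (X + C (j : ℚ)))) * hC

theorem raabeDefect_eq_zero (hr : r ≠ 0) (n : ℕ) : raabeDefect r n = 0 := by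
  have hconst : ∀ m, raabeDefect r m = C ((raabeDefect r m).eval 0) := fun m =>
    eq_C_eval_zero_of_eval_add_one (raabeDefect_eval_add_one hr m)
  have h := derivative_raabeDefect_succ hr n
  rw [hconst (n + 1), derivative_C, hconst n, eq_comm, mul_eq_zero] at h
  rw [hconst n]
  exact h.resolve_left (Nat.cast_add_one_ne_zero n)

end Polynomial

theorem bernPoly_eq_aeval (n : ℕ) (x : ℝ) : bernPoly n x = aeval x (bernoulli n) :=
  eval_map_algebraMap _ _

theorem sum_bernPoly_add_div {r : ℕ} (hr : r ≠ 0) (n : ℕ) (x : ℝ) :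
    ∑ j ∈ range r, bernPoly n (x + j / r) = (r : ℝ) ^ ((1 : ℤ) - n) * bernPoly n (r * x) := by
  have hr' : (r : ℝ) ≠ 0 := Nat.cast_ne_zero.mpr hr
  have h := congrArg (aeval ((r : ℝ) * x)) (raabeDefect_eq_zero hr n)
  simp only [raabeDefect, map_sub, map_mul, map_sum, aeval_C, aeval_comp, map_add, aeval_X,
    map_zero, map_pow, map_inv₀, map_natCast, ← bernPoly_eq_aeval] at h
  have hshift : ∀ j : ℕ, (r : ℝ)⁻¹ * (r * x + j) = x + j / r := fun j => by field_simp
  simp only [hshift] at h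
  rw [zpow_sub₀ hr', zpow_one, zpow_natCast, div_mul_eq_mul_div, eq_div_iff (pow_ne_zero n hr')]
  linear_combination h

theorem pB_periodic (n : ℕ) : Function.Periodic (pB n) 1 := fun x => by
  simp only [pB, Int.fract_add_one]

theorem pB_of_mem_Ico {n : ℕ} {x : ℝ} (hx : x ∈ Set.Ico 0 1) (h : ¬(n = 1 ∧ x = 0)) :
    pB n x = bernPoly n x := by
  rw [pB, Int.fract_eq_self.mpr hx, if_neg h]

theorem add_div_mem_Ico_of_mem_Ico {r : ℕ} (hr : 0 < r) {y : ℝ} (hy : y ∈ Set.Ico 0 (r : ℝ)⁻¹)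
    {j : ℕ} (hj : j < r) : y + j / r ∈ Set.Ico 0 1 := by
  have hr' : (0 : ℝ) < r := Nat.cast_pos.mpr hr
  have hj' : (j : ℝ) + 1 ≤ r := by exact_mod_cast hj
  refine ⟨add_nonneg hy.1 (by positivity), ?_⟩
  calc y + j / r < (r : ℝ)⁻¹ + j / r := by gcongr; exact hy.2
    _ = (j + 1) / r := by ring
    _ ≤ 1 := (div_le_one hr').mpr hj'

theorem sum_pB_one_div {r : ℕ} (hr : 0 < r) : ∑ j ∈ range r, pB 1 (j / r) = 0 := by
  obtain ⟨s, rfl⟩ : ∃ s, r = s + 1 := ⟨r - 1, by omega⟩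
  have hpoly := sum_bernPoly_add_div (Nat.succ_ne_zero s) 1 0
  have hterm : ∀ j ∈ range s, pB 1 (↑(j + 1) / ↑(s + 1)) = bernPoly 1 (0 + ↑(j + 1) / ↑(s + 1)) :=
    fun j hj => by
      have hmem := add_div_mem_Ico_of_mem_Ico hr (y := 0) ⟨le_rfl, by positivity⟩
        (Nat.succ_lt_succ (mem_range.mp hj))
      rw [zero_add] at hmem ⊢
      exact pB_of_mem_Ico hmem fun h => (div_pos (by positivity) (by positivity)).ne' h.2
  rw [sum_range_succ'] at hpoly ⊢
  rw [sum_congr rfl hterm]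
  simpa [pB] using hpoly

theorem sum_pB_add_div_of_mem_Ico {r : ℕ} (hr : 0 < r) (n : ℕ) {y : ℝ}
    (hy : y ∈ Set.Ico 0 (r : ℝ)⁻¹) :
    ∑ j ∈ range r, pB n (y + j / r) = (r : ℝ) ^ ((1 : ℤ) - n) * pB n (r * y) := by
  by_cases hedge : n = 1 ∧ y = 0
  · obtain ⟨rfl, rfl⟩ := hedge
    simpa [pB] using sum_pB_one_div hr
  have hr' : (0 : ℝ) < r := Nat.cast_pos.mpr hr
  have hry : (r : ℝ) * y ∈ Set.Ico 0 1 := by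
    refine ⟨mul_nonneg hr'.le hy.1, ?_⟩
    calc (r : ℝ) * y < r * (r : ℝ)⁻¹ := by gcongr; exact hy.2
      _ = 1 := mul_inv_cancel₀ hr'.ne'
  have hterm : ∀ j ∈ range r, pB n (y + j / r) = bernPoly n (y + j / r) := fun j hj =>
    pB_of_mem_Ico (add_div_mem_Ico_of_mem_Ico hr hy (mem_range.mp hj)) fun h =>
      hedge ⟨h.1, ((add_eq_zero_iff_of_nonneg hy.1 (by positivity)).mp h.2).1⟩
  rw [sum_congr rfl hterm, sum_bernPoly_add_div hr.ne', pB_of_mem_Ico hry fun h =>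
    hedge ⟨h.1, (mul_eq_zero.mp h.2).resolve_left hr'.ne'⟩]

theorem sum_pB_add_div_periodic {r : ℕ} (hr : 0 < r) (n : ℕ) :
    Function.Periodic (fun x => ∑ j ∈ range r, pB n (x + j / r)) (r : ℝ)⁻¹ := fun x => by
  have hr' : (r : ℝ) ≠ 0 := Nat.cast_ne_zero.mpr hr.ne'
  have hshift : ∀ j : ℕ, x + (r : ℝ)⁻¹ + j / r = x + ↑(j + 1) / r := fun j => by
    push_cast; ring
  have h := sum_range_succ' (fun j => pB n (x + j / r)) r
  rw [sum_range_succ] at h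
  simp only [div_self hr', pB_periodic n x, Nat.cast_zero, zero_div, add_zero] at h
  simp only [hshift]
  linarith

theorem stmt1_general (r n : ℕ) (hr : 0 < r) (x : ℝ) :
    ∑ j ∈ Finset.range r, pB n (x + j / r) = (r : ℝ) ^ ((1 : ℤ) - n) * pB n (r * x) := by
  have hrhs := ((pB_periodic n).const_mul (r : ℝ)).comp fun t => (r : ℝ) ^ ((1 : ℤ) - n) * t
  rw [mul_one] at hrhs
  refine congrFun ((sum_pB_add_div_periodic hr n).eq_of_eqOn_Ico hrhs (by positivity) ?_) x
  exact fun y hy => sum_pB_add_div_of_mem_Ico hr n hy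

theorem stmt1 (r n : ℕ) (hr : 0 < r) (hn : 0 < n) (x : ℝ) :
    ∑ j ∈ Finset.range r, pB n (x + j / r) = (r : ℝ) ^ ((1 : ℤ) - n) * pB n (r * x) :=
  stmt1_general r n hr x
end

section
/- Let χ be a primitive Dirichlet character of modulus k, m ≥ 1 an integer, r a positive integer, and x real. Then Σ_{j=0}^{r-1} 𝔅_{m,χ}(x + jk/r) = χ(r) r^{1-m} 𝔅_{m,χ}(r x). -/
open Finset

/-! Summing over `j` first, each inner sum is an instance of the multiplication formula
`∑_{i<r} 𝔅_m(x + i/r) = r^{1-m} 𝔅_m(rx)` for the periodic Bernoulli function (by periodicity it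
reduces to the multiplication theorem for Bernoulli polynomials on `[0, 1)`; the convention
`𝔅₁(0) = 0` shifts both sides alike). This leaves `r^{1-m} k^{m-1} ∑_a χ̄(a) 𝔅_m((ra + rx)/k)`.
The twist `a ↦ ra` is absorbed by the character: for primitive `χ` and any `f` on `ℤ/kℤ`,
`∑_a χ(a) f(ra) = χ⁻¹(r) ∑_a χ(a) f(a)`, as one sees by expanding `f` in additive characters,
since the Gauss sums of a primitive character satisfy the same identity (they vanish at
imprimitive additive characters, which covers `gcd(r, k) > 1`). -/

open Function

theorem ZMod.sum_range_natCast {N : ℕ} [NeZero N] {M : Type*} [AddCommMonoid M]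
    (g : ZMod N → M) : ∑ a ∈ range N, g a = ∑ z, g z :=
  sum_nbij' (↑) ZMod.val (fun _ _ => mem_univ _) (fun z _ => mem_range.2 z.val_lt)
    (fun _ ha => ZMod.val_cast_of_lt (mem_range.1 ha)) (fun z _ => ZMod.natCast_zmod_val z)
    (fun _ _ => rfl)

namespace DirichletCharacter

open ZMod

variable {N : ℕ} {χ : DirichletCharacter ℂ N}

theorem IsPrimitive.inv (hχ : χ.IsPrimitive) : χ⁻¹.IsPrimitive :=
  (conductor_inv χ).trans hχ

theorem IsPrimitive.sum_mul_apply_mul [NeZero N] (hχ : χ.IsPrimitive) (f : ZMod N → ℂ)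
    (r : ZMod N) : ∑ a, χ a * f (r * a) = χ⁻¹ r * ∑ a, χ a * f a := by
  have fourier (g : ZMod N → ZMod N) : ∑ a, χ a * f (g a) =
      (N : ℂ)⁻¹ * ∑ b, 𝓕 f b * ∑ a, χ a * stdAddChar (b * g a) := by
    conv_lhs => rw [← (𝓕 : (ZMod N → ℂ) ≃ₗ[ℂ] _).symm_apply_apply f]
    simp only [invDFT_apply, smul_eq_mul, mul_sum]
    rw [sum_comm]
    exact sum_congr rfl fun b _ => sum_congr rfl fun a _ => by ring
  have gauss (b : ZMod N) :
      ∑ a, χ a * stdAddChar (b * (r * a)) = χ⁻¹ r * ∑ a, χ a * stdAddChar (b * a) := by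
    simpa [gaussSum, AddChar.mulShift_apply, mul_comm, mul_left_comm] using
      gaussSum_mulShift_of_isPrimitive (stdAddChar.mulShift b) hχ r
  have fourier_id := fourier fun a => a
  beta_reduce at fourier_id
  rw [fourier, fourier_id, mul_sum, mul_sum, mul_sum]
  simp only [gauss]
  exact sum_congr rfl fun b _ => by ring

theorem IsPrimitive.sum_range_mul_apply_mul_of_periodic (hχ : χ.IsPrimitive) {f : ℕ → ℂ}
    (hf : Periodic f N) (r : ℕ) :
    ∑ a ∈ range N, χ a * f (r * a) = χ⁻¹ r * ∑ a ∈ range N, χ a * f a := by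
  rcases N.eq_zero_or_pos with rfl | hN
  · simp
  have := NeZero.of_pos hN
  calc ∑ a ∈ range N, χ a * f (r * a)
      = ∑ a ∈ range N, χ a * f ((r : ZMod N) * a).val :=
        sum_congr rfl fun a _ => by rw [← Nat.cast_mul, ZMod.val_natCast, hf.map_mod_nat]
    _ = ∑ z, χ z * f (r * z).val :=
        ZMod.sum_range_natCast fun z => χ z * f ((r : ZMod N) * z).val
    _ = χ⁻¹ r * ∑ z, χ z * f z.val := hχ.sum_mul_apply_mul (fun z => f z.val) r
    _ = χ⁻¹ r * ∑ a ∈ range N, χ a * f a := by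
        rw [← ZMod.sum_range_natCast fun z => χ z * f z.val]
        simp only [ZMod.val_natCast, hf.map_mod_nat]

end DirichletCharacter

theorem Function.Periodic.sum_range_add_div {M : Type*} [AddCommGroup M] {f : ℝ → M}
    (hf : Periodic f 1) (r : ℕ) : Periodic (fun x => ∑ i ∈ range r, f (x + i / r)) (r : ℝ)⁻¹ := by
  rcases Nat.eq_zero_or_pos r with rfl | hr
  · simp [Periodic]
  intro x
  have hr' : (r : ℝ) ≠ 0 := by positivity
  have shift := (sum_range_succ' (fun i : ℕ => f (x + i / r)) r).symm.trans
    (sum_range_succ (fun i : ℕ => f (x + i / r)) r)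
  rw [div_self hr', hf, Nat.cast_zero, zero_div, add_zero, add_left_inj] at shift
  simp only
  rw [← shift]
  refine sum_congr rfl fun i _ => congrArg f ?_
  push_cast
  ring

theorem pB_periodic_s6 (m : ℕ) : Periodic (pB m) 1 := by
  intro x
  simp [pB]

theorem pB_fract (m : ℕ) (x : ℝ) : pB m (Int.fract x) = pB m x := by
  simp [pB, Int.fract_fract]

theorem pB_eq_bernoulliFun {m : ℕ} {t : ℝ} (ht : t ∈ Set.Ico 0 1) (h : m ≠ 1 ∨ t ≠ 0) :
    pB m t = bernoulliFun m t := by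
  rw [pB, Int.fract_eq_self.2 ht, if_neg (by tauto)]
  rfl

theorem sum_range_pB_add_div_of_mem_Ico (m : ℕ) {r : ℕ} (hr : r ≠ 0) {s : ℝ}
    (hs : s ∈ Set.Ico 0 1) :
    ∑ i ∈ range r, pB m (s / r + i / r) = (r : ℝ) ^ (1 - m : ℤ) * pB m s := by
  have hr' : (0 : ℝ) < r := by positivity
  have mem_Ico : ∀ i ∈ range r, s / r + i / r ∈ Set.Ico 0 1 := fun i hi => by
    have : (i : ℝ) + 1 ≤ r := by exact_mod_cast mem_range.1 hi
    constructor
    · have := hs.1; positivity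
    · rw [← add_div, div_lt_one hr']; linarith [hs.2]
  have mul := bernoulliFun_mul m hr (s / r)
  rw [mul_div_cancel₀ _ hr'.ne'] at mul
  by_cases h : m ≠ 1 ∨ s ≠ 0
  · have hi : ∀ i ∈ range r, pB m (s / r + i / r) = bernoulliFun m (s / r + i / r) := by
      intro i hi
      refine pB_eq_bernoulliFun (mem_Ico i hi) (h.imp_right fun hs0 => ?_)
      have : 0 < s := hs.1.lt_of_ne (Ne.symm hs0)
      positivity
    rw [sum_congr rfl hi, pB_eq_bernoulliFun hs h, mul, zpow_sub₀ hr'.ne', zpow_one, zpow_natCast]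
    field_simp
  · obtain ⟨rfl, rfl⟩ : m = 1 ∧ s = 0 := by tauto
    obtain ⟨n, rfl⟩ := Nat.exists_eq_succ_of_ne_zero hr
    rw [sum_range_succ'] at mul ⊢
    have hpB0 : pB 1 0 = 0 := by simp [pB]
    have hi : ∀ i ∈ range n, pB 1 (0 / (n.succ : ℝ) + ((i + 1 : ℕ) : ℝ) / n.succ) =
        bernoulliFun 1 (0 / (n.succ : ℝ) + ((i + 1 : ℕ) : ℝ) / n.succ) := fun i hi =>
      pB_eq_bernoulliFun (mem_Ico _ (by simpa using hi)) (Or.inr (by positivity))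
    rw [sum_congr rfl hi]
    rw [pow_one, div_self hr'.ne', one_mul] at mul
    simp only [Nat.cast_zero, zero_div, add_zero, hpB0, mul_zero] at mul ⊢
    linarith

theorem sum_range_pB_add_div (m : ℕ) {r : ℕ} (hr : r ≠ 0) (x : ℝ) :
    ∑ i ∈ range r, pB m (x + i / r) = (r : ℝ) ^ (1 - m : ℤ) * pB m (r * x) := by
  have reduce : x - ⌊r * x⌋ * (r : ℝ)⁻¹ = Int.fract (r * x) / r := by
    rw [Int.fract]
    field_simp
  calc ∑ i ∈ range r, pB m (x + i / r)
      = ∑ i ∈ range r, pB m (Int.fract (r * x) / r + i / r) := by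
        rw [← reduce]
        exact (((pB_periodic_s6 m).sum_range_add_div r).sub_int_mul_eq _).symm
    _ = (r : ℝ) ^ (1 - m : ℤ) * pB m (Int.fract (r * x)) :=
        sum_range_pB_add_div_of_mem_Ico m hr ⟨Int.fract_nonneg _, Int.fract_lt_one _⟩
    _ = (r : ℝ) ^ (1 - m : ℤ) * pB m (r * x) := by rw [pB_fract]

theorem conjChar_eq_inv {k : ℕ} (χ : DirichletCharacter ℂ k) : conjChar χ = χ⁻¹ :=
  MulChar.star_eq_inv χ

theorem sum_range_conjChar_mul_pB_mul {k : ℕ} {χ : DirichletCharacter ℂ k} (hχ : χ.IsPrimitive)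
    (m r : ℕ) (y : ℝ) :
    ∑ a ∈ range k, conjChar χ a * ((pB m ((r * a + y) / k) : ℝ) : ℂ) =
      χ r * ∑ a ∈ range k, conjChar χ a * ((pB m ((a + y) / k) : ℝ) : ℂ) := by
  have hf : Periodic (fun a : ℕ => ((pB m ((a + y) / k) : ℝ) : ℂ)) k := by
    intro a
    rcases eq_or_ne k 0 with rfl | hk
    · simp
    · simp only [Nat.cast_add]
      rw [show ((a : ℝ) + k + y) / k = (a + y) / k + 1 by field_simp; ring, pB_periodic_s6]
  simpa [conjChar_eq_inv] using hχ.inv.sum_range_mul_apply_mul_of_periodic hf r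

theorem stmt6_general (k : ℕ) (χ : DirichletCharacter ℂ k) (hprim : χ.IsPrimitive)
    (m : ℕ) (r : ℕ) (hr : 0 < r) (x : ℝ) :
    ∑ j ∈ Finset.range r, genB χ m (x + j * k / r) =
      χ r * (r : ℂ) ^ ((1 : ℤ) - m) * genB χ m (r * x) := by
  calc ∑ j ∈ range r, genB χ m (x + j * k / r)
      = (k : ℂ) ^ ((m : ℤ) - 1) * ∑ a ∈ range k, conjChar χ a *
          ((∑ j ∈ range r, pB m ((a + x) / k + j / r) : ℝ) : ℂ) := by
        simp only [genB, ← mul_sum, Complex.ofReal_sum]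
        rw [sum_comm]
        refine congrArg _ (sum_congr rfl fun a ha => ?_)
        rw [mul_sum]
        refine sum_congr rfl fun j _ => ?_
        have : (k : ℝ) ≠ 0 := Nat.cast_ne_zero.2 (Nat.ne_zero_of_lt (mem_range.1 ha))
        congr 3
        field_simp
        ring
    _ = (r : ℂ) ^ ((1 : ℤ) - m) * ((k : ℂ) ^ ((m : ℤ) - 1) * ∑ a ∈ range k,
          conjChar χ a * ((pB m ((r * a + r * x) / k) : ℝ) : ℂ)) := by
        simp only [sum_range_pB_add_div m hr.ne', mul_sum, mul_div_assoc', mul_add]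
        refine sum_congr rfl fun a _ => ?_
        push_cast
        ring
    _ = χ r * (r : ℂ) ^ ((1 : ℤ) - m) * genB χ m (r * x) := by
        rw [sum_range_conjChar_mul_pB_mul hprim, genB]
        ring

theorem stmt6 (k : ℕ) (χ : DirichletCharacter ℂ k) (hprim : χ.IsPrimitive)
    (m : ℕ) (hm : 1 ≤ m) (r : ℕ) (hr : 0 < r) (x : ℝ) :
    ∑ j ∈ Finset.range r, genB χ m (x + j * k / r) =
      χ r * (r : ℂ) ^ ((1 : ℤ) - m) * genB χ m (r * x) :=
  stmt6_general k χ hprim m r hr x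
end

section
/- Let χ be a Dirichlet character of odd modulus k, p ≥ 1 odd, q a positive integer, and d, c coprime positive integers with c > 0 and d even. Then s_{1,p}(qd, qc : χ) = s_{1,p}(d, c : χ), where s_{1,p}(d,c:χ) = Σ_{n=1}^{ck} χ(n) ℰ_{p−1,χ}(dn/c) 𝔅_1(n/(ck)). -/
open Finset

/- ### Auxiliary lemmas -/

lemma bernPoly_one (x : ℝ) : bernPoly 1 x = x - 1/2 := by
  simp [bernPoly, Polynomial.bernoulli, Finset.sum_range_succ, bernoulli_one, bernoulli_zero]
  ring

lemma pB_one (x : ℝ) : pB 1 x = if Int.fract x = 0 then 0 else Int.fract x - 1/2 := by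
  simp [pB, bernPoly_one]

lemma sum_range_mul' {M : Type*} [AddCommMonoid M] (f : ℕ → M) (q m : ℕ) :
    ∑ i ∈ range (q * m), f i = ∑ r ∈ range q, ∑ j ∈ range m, f (r * m + j) := by
  induction q with
  | zero => simp
  | succ q ih => rw [Nat.succ_mul, Finset.sum_range_add, ih, Finset.sum_range_succ]

lemma fract_int_add_div (m : ℤ) (f : ℝ) (hf0 : 0 ≤ f) (hf1 : f < 1) (q : ℕ) (hq : 0 < q) :
    Int.fract (((m : ℝ) + f) / q) = (((m % q : ℤ) : ℝ) + f) / q := by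
  have hq' : (0:ℝ) < q := by exact_mod_cast hq
  have h1 : (0:ℤ) ≤ m % q := Int.emod_nonneg m (by exact_mod_cast hq.ne')
  have h2 : m % q < q := Int.emod_lt_of_pos m (by exact_mod_cast hq)
  have h1R : (0:ℝ) ≤ ((m % q : ℤ) : ℝ) := by exact_mod_cast h1
  have hR : ((m % q : ℤ):ℝ) + (q:ℝ) * ((m / q : ℤ):ℝ) = (m:ℝ) := by
    exact_mod_cast congrArg (Int.cast : ℤ → ℝ) (Int.emod_add_mul_ediv m q)
  have key : ((m:ℝ) + f) / q = ((m / q : ℤ):ℝ) + (((m % q : ℤ) : ℝ) + f) / q := by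
    field_simp
    linarith
  rw [key]
  rw [show ((m / q : ℤ):ℝ) + (((m % q : ℤ) : ℝ) + f) / q
      = (((m % q : ℤ) : ℝ) + f) / q + ((m / q : ℤ):ℝ) by ring]
  rw [Int.fract_add_intCast, Int.fract_eq_self.mpr ?_]
  constructor
  · positivity
  · rw [div_lt_one hq']
    have : ((m % q : ℤ) : ℝ) ≤ (q:ℝ) - 1 := by
      have : m % q ≤ (q:ℤ) - 1 := by omega
      exact_mod_cast this
    linarith

lemma sum_emod_perm (q : ℕ) (hq : 0 < q) (m : ℤ) (G : ℕ → ℝ) :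
    ∑ r ∈ range q, G ((m + r) % q).toNat = ∑ s ∈ range q, G s := by
  refine Finset.sum_nbij' (fun r => ((m + r) % q).toNat) (fun s => (((s : ℤ) - m) % q).toNat)
    ?_ ?_ ?_ ?_ ?_
  · intro r hr
    simp only [Finset.mem_range] at *
    have h1 : (0:ℤ) ≤ (m + r) % q := Int.emod_nonneg _ (by exact_mod_cast hq.ne')
    have h2 : (m + r) % q < q := Int.emod_lt_of_pos _ (by exact_mod_cast hq)
    omega
  · intro s hs
    simp only [Finset.mem_range] at *
    have h1 : (0:ℤ) ≤ ((s:ℤ) - m) % q := Int.emod_nonneg _ (by exact_mod_cast hq.ne')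
    have h2 : ((s:ℤ) - m) % q < q := Int.emod_lt_of_pos _ (by exact_mod_cast hq)
    omega
  · intro r hr
    simp only [Finset.mem_range] at hr
    have h1 : (0:ℤ) ≤ (m + r) % q := Int.emod_nonneg _ (by exact_mod_cast hq.ne')
    have key : ((((m + r) % q).toNat : ℤ) - m) % q = (r : ℤ) % q := by
      rw [Int.toNat_of_nonneg h1, Int.sub_emod, Int.emod_emod_of_dvd _ dvd_rfl]
      rw [← Int.sub_emod]
      congr 1; ring_nf
    show (((((m + r:ℤ) % q).toNat : ℤ) - m) % q).toNat = r
    have : (r:ℤ) % q = r := Int.emod_eq_of_lt (by positivity) (by exact_mod_cast hr)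
    omega
  · intro s hs
    simp only [Finset.mem_range] at hs
    have h1 : (0:ℤ) ≤ ((s:ℤ) - m) % q := Int.emod_nonneg _ (by exact_mod_cast hq.ne')
    have key : (m + ((((s:ℤ) - m) % q).toNat : ℤ)) % q = (s : ℤ) % q := by
      rw [Int.toNat_of_nonneg h1, Int.add_emod, Int.emod_emod_of_dvd _ dvd_rfl, ← Int.add_emod]
      congr 1; ring_nf
    show ((m + ((((s:ℤ) - m) % q).toNat : ℤ)) % q).toNat = s
    have : (s:ℤ) % q = s := Int.emod_eq_of_lt (by positivity) (by exact_mod_cast hs)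
    omega
  · intro r hr; rfl

lemma gauss_real (q : ℕ) (hq1 : 1 ≤ q) : ∑ s ∈ range q, (s:ℝ) = (q:ℝ) * ((q:ℝ) - 1) / 2 := by
  have h2 : ((∑ i ∈ range q, i : ℕ) : ℝ) * 2 = ((q * (q-1) : ℕ) : ℝ) := by
    exact_mod_cast Finset.sum_range_id_mul_two q
  rw [Nat.cast_mul, Nat.cast_sub hq1] at h2
  push_cast at h2 ⊢
  linarith

lemma pB1_dist (q : ℕ) (hq : 0 < q) (x : ℝ) :
    ∑ r ∈ range q, pB 1 ((x + r) / q) = pB 1 x := by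
  have hq' : (0:ℝ) < q := by exact_mod_cast hq
  set f := Int.fract x with hf
  have hf0 : 0 ≤ f := Int.fract_nonneg x
  have hf1 : f < 1 := Int.fract_lt_one x
  set G : ℕ → ℝ := fun s => if ((s:ℝ) + f) / q = 0 then 0 else ((s:ℝ) + f) / q - 1/2 with hG
  have step1 : ∀ r : ℕ, pB 1 ((x + r) / q) = G ((⌊x⌋ + r) % q).toNat := by
    intro r
    have hx : x + r = ((⌊x⌋ + r : ℤ) : ℝ) + f := by
      push_cast
      have := Int.floor_add_fract x
      rw [hf]
      linarith
    rw [pB_one, hx, fract_int_add_div _ _ hf0 hf1 q hq, hG]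
    have h1 : (0:ℤ) ≤ (⌊x⌋ + r) % q := Int.emod_nonneg _ (by exact_mod_cast hq.ne')
    have h2 : ((((⌊x⌋ + (r:ℤ)) % q).toNat : ℕ) : ℝ) = (((⌊x⌋ + r) % q : ℤ) : ℝ) := by
      exact_mod_cast congrArg (Int.cast : ℤ → ℝ) (Int.toNat_of_nonneg h1)
    simp only []
    rw [h2]
  rw [Finset.sum_congr rfl fun r _ => step1 r, sum_emod_perm q hq _ G]
  rw [pB_one]
  by_cases hfz : f = 0
  · rw [if_pos hfz]
    obtain ⟨q', rfl⟩ := Nat.exists_eq_succ_of_ne_zero hq.ne'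
    rw [Finset.sum_range_succ']
    have hG0 : G 0 = 0 := by simp [hG, hfz]
    have hGs : ∀ i : ℕ, G (i + 1) = ((i:ℝ) + 1) / (q'+1) - 1/2 := by
      intro i
      simp only [hG, hfz, add_zero]
      rw [if_neg (by push_cast; positivity)]
      push_cast
      ring
    rw [hG0, add_zero, Finset.sum_congr rfl fun i _ => hGs i]
    have hg : ∑ i ∈ range q', ((i:ℝ) + 1) = ((q'+1:ℕ):ℝ) * (((q'+1:ℕ):ℝ) - 1) / 2 := by
      rw [← gauss_real (q'+1) (by omega), Finset.sum_range_succ']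
      push_cast
      ring
    rw [Finset.sum_sub_distrib, ← Finset.sum_div, hg]
    simp only [Finset.sum_const, Finset.card_range, nsmul_eq_mul]
    push_cast
    field_simp
    ring
  · rw [if_neg hfz]
    have hfpos : 0 < f := lt_of_le_of_ne hf0 (Ne.symm hfz)
    have hGs : ∀ s : ℕ, G s = ((s:ℝ) + f) / q - 1/2 := by
      intro s
      simp only [hG]
      rw [if_neg (by positivity)]
    rw [Finset.sum_congr rfl fun s _ => hGs s, Finset.sum_sub_distrib, ← Finset.sum_div,
      Finset.sum_add_distrib, gauss_real q hq]
    simp only [Finset.sum_const, Finset.card_range, nsmul_eq_mul]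
    field_simp
    ring

lemma pE_add_nat (n : ℕ) (x : ℝ) (a : ℕ) : pE n (x + a) = (-1 : ℝ) ^ a * pE n x := by
  unfold pE
  rw [show ((a:ℕ):ℝ) = ((a:ℤ):ℝ) by push_cast; ring, Int.floor_add_intCast, Int.fract_add_intCast,
    zpow_add₀ (by norm_num : (-1:ℝ) ≠ 0), zpow_natCast]
  ring

lemma genE_add_nat_mul {k : ℕ} (hk : k ≠ 0) (χ : DirichletCharacter ℂ k) (m : ℕ) (x : ℝ)
    (a : ℕ) : genE χ m (x + a * k) = (-1 : ℂ) ^ a * genE χ m x := by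
  unfold genE
  simp only [Finset.mul_sum]
  refine Finset.sum_congr rfl fun j hj => ?_
  have hk' : (k:ℝ) ≠ 0 := Nat.cast_ne_zero.mpr hk
  have harg : ((j:ℝ) + (x + a * k)) / k = ((j:ℝ) + x) / k + a := by field_simp; ring
  rw [harg, pE_add_nat]
  push_cast
  ring

theorem stmt11 (k : ℕ) (hk : Odd k) (χ : DirichletCharacter ℂ k)
    (p : ℕ) (hp : Odd p) (hp1 : 1 ≤ p) (q : ℕ) (hq : 0 < q)
    (d c : ℕ) (hd : 0 < d) (hc : 0 < c) (hcop : Nat.Coprime d c) (hdeven : Even d) :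
    s1p χ p (q * d) (q * c) = s1p χ p d c := by
  have hk0 : k ≠ 0 := by rintro rfl; simp [Nat.odd_iff] at hk
  have hk1 : 0 < k := Nat.pos_of_ne_zero hk0
  have hM0 : 0 < c * k := Nat.mul_pos hc hk1
  have hqR : (0:ℝ) < q := by exact_mod_cast hq
  have hcR : (0:ℝ) < c := by exact_mod_cast hc
  have hkR : (0:ℝ) < k := by exact_mod_cast hk1
  have hMR : (0:ℝ) < (c:ℝ) * k := by positivity
  unfold s1p
  have hIcc : ∀ (N : ℕ) (F : ℕ → ℂ), ∑ n ∈ Icc 1 N, F n = ∑ i ∈ range N, F (1 + i) := by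
    intro N F
    rw [← Finset.Ico_add_one_right_eq_Icc, Finset.sum_Ico_eq_sum_range]
    simp
  rw [hIcc, hIcc, show q * c * k = q * (c * k) by ring, sum_range_mul', Finset.sum_comm]
  refine Finset.sum_congr rfl fun j hj => ?_
  -- For fixed j, the inner sum over r collapses via the distribution relation.
  have hχ : ∀ r : ℕ, (((1 + (r * (c * k) + j) : ℕ) : ZMod k)) = ((1 + j : ℕ) : ZMod k) := by
    intro r
    push_cast
    simp [ZMod.natCast_self]
  have hgen : ∀ r : ℕ,
      genE χ (p - 1) (((q * d : ℕ) : ℝ) * ((1 + (r * (c * k) + j) : ℕ) : ℝ) / ((q * c : ℕ) : ℝ))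
        = genE χ (p - 1) ((d : ℝ) * ((1 + j : ℕ) : ℝ) / c) := by
    intro r
    have harg : ((q * d : ℕ) : ℝ) * ((1 + (r * (c * k) + j) : ℕ) : ℝ) / ((q * c : ℕ) : ℝ)
        = (d : ℝ) * ((1 + j : ℕ) : ℝ) / c + ((r * d : ℕ) : ℝ) * k := by
      push_cast
      field_simp
      ring
    rw [harg, genE_add_nat_mul hk0 χ _ _ (r * d), Even.neg_one_pow (hdeven.mul_left r), one_mul]
  have hpBarg : ∀ r : ℕ,
      ((1 + (r * (c * k) + j) : ℕ) : ℝ) / (((q * c : ℕ) : ℝ) * k)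
        = ((((1 + j : ℕ) : ℝ) / ((c : ℝ) * k) + r) / q) := by
    intro r
    push_cast
    field_simp
    ring
  have hterm : ∀ r ∈ range q,
      χ ((1 + (r * (c * k) + j) : ℕ)) *
          genE χ (p - 1) (((q * d : ℕ) : ℝ) * ((1 + (r * (c * k) + j) : ℕ) : ℝ) / ((q * c : ℕ) : ℝ)) *
          ((pB 1 (((1 + (r * (c * k) + j) : ℕ) : ℝ) / (((q * c : ℕ) : ℝ) * k)) : ℝ) : ℂ)
        = χ ((1 + j : ℕ)) * genE χ (p - 1) ((d : ℝ) * ((1 + j : ℕ) : ℝ) / c) *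
          ((pB 1 ((((1 + j : ℕ) : ℝ) / ((c : ℝ) * k) + r) / q) : ℝ) : ℂ) := by
    intro r _
    rw [hχ r, hgen r, hpBarg r]
  rw [Finset.sum_congr rfl hterm, ← Finset.mul_sum, ← Complex.ofReal_sum, pB1_dist q hq]
end
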